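/- Let e be a Hermite–Biehler function (in particular, e has no real zeros) and let β ∈ [0,π). Then every zero of s_β is real and simple: if s_β(z₀) = 0 for some z₀ ∈ ℂ, then z₀ ∈ ℝ and s'_β(z₀) ≠ 0. -/

import Mathlib

open Complex MeasureTheory Filter Topology
open scoped ENNReal Classical

noncomputable section

/-- `f^#(z) = conj (f (conj z))`. -/
def sharp (f : ℂ → ℂ) : ℂ → ℂ := fun z => (starRingEnd ℂ) (f ((starRingEnd ℂ) z))

/-- Hermite–Biehler function: entire, no real zeros, `|e(conj z)| < |e z)|` on the upper
half-plane. -/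
def HermiteBiehler (e : ℂ → ℂ) : Prop :=
  Differentiable ℂ e ∧ (∀ x : ℝ, e x ≠ 0) ∧
    ∀ z : ℂ, 0 < z.im → ‖e ((starRingEnd ℂ) z)‖ < ‖e z‖

/-- Hardy space `H²` of the upper half-plane. -/
def HardyH2 (f : ℂ → ℂ) : Prop :=
  DifferentiableOn ℂ f {z : ℂ | 0 < z.im} ∧
    ∃ C : ℝ≥0∞, C ≠ ⊤ ∧ ∀ y : ℝ, 0 < y →
      eLpNorm (fun x : ℝ => f (x + y * Complex.I)) 2 volume ≤ C

/-- Membership in the de Branges space `ℬ(e)`. -/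
def MemDB (e f : ℂ → ℂ) : Prop :=
  Differentiable ℂ f ∧ HardyH2 (fun z => f z / e z) ∧ HardyH2 (fun z => sharp f z / e z)

/-- The associated functions `s_β`. -/
def sFun (e : ℂ → ℂ) (β : ℝ) : ℂ → ℂ := fun z =>
  (Complex.I / 2) * (Complex.exp (Complex.I * β) * e z -
    Complex.exp (-(Complex.I * β)) * sharp e z)

/-- Integrand of the de Branges inner product `⟨g, f⟩`. -/
def dbItg (e g f : ℂ → ℂ) (x : ℝ) : ℂ :=
  (starRingEnd ℂ) (g x) * f x / ((‖e x‖ : ℂ)) ^ 2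

/-- The domain of the canonical selfadjoint extension `S_β`, `β ∈ (0,π)`. -/
def domS (e : ℂ → ℂ) (β : ℝ) : Set (ℂ → ℂ) :=
  {g | Differentiable ℂ g ∧ ∃ f : ℂ → ℂ, MemDB e f ∧ ∃ w : ℂ, ∀ z : ℂ, z ≠ w →
    g z = (sFun e β w * f z - sFun e β z * f w) / (Real.sin β * (z - w))}

/-! Write `s_β = κ e (1 - ω e^#/e)` with `κ ≠ 0` and `|ω| = 1`. A zero of `s_β` forces
`|e^#(z)| = |e(z)|`, which the Hermite–Biehler inequality excludes off the real line.
Since `|e^#| ≤ |e|` on the closed upper half-plane, `h = s_β / (κ e)` has `Re h ≥ 0` there.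
If `h` had a zero of order `n ≥ 2` at a real point `z₀`, then `h(z₀ + r u) ≈ rⁿ uⁿ h⁽ⁿ⁾(z₀)/n!`
would have negative real part for a suitable direction `u` in the closed upper half-plane.
So a double zero forces `h ≡ 0` near `z₀`, and then `s_β` would vanish off the real line. -/

open ComplexConjugate

theorem exists_im_nonneg_re_pow_mul_neg {a : ℂ} (ha : a ≠ 0) {n : ℕ} (hn : 2 ≤ n) :
    ∃ u : ℂ, 0 ≤ u.im ∧ (u ^ n * a).re < 0 := by
  have hn0 : (0 : ℝ) < n := by positivity
  set θ : ℝ := (Real.pi - arg a) / n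
  refine ⟨exp (θ * I), ?_, ?_⟩
  · rw [exp_ofReal_mul_I_im]
    apply Real.sin_nonneg_of_nonneg_of_le_pi
    · exact div_nonneg (by linarith [arg_le_pi a]) hn0.le
    · rw [div_le_iff₀ hn0]
      have : (2 : ℝ) ≤ n := by exact_mod_cast hn
      nlinarith [neg_pi_lt_arg a, Real.pi_pos]
  · have hnθ : (n : ℂ) * (θ * I) = (Real.pi : ℂ) * I - (arg a : ℂ) * I := by
      have : (n : ℂ) ≠ 0 := by exact_mod_cast hn0.ne'
      simp only [θ]
      push_cast
      field_simp
    have : exp (θ * I) ^ n * a = -(‖a‖ : ℂ) := by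
      rw [← exp_nat_mul, hnθ, exp_sub, exp_pi_mul_I, div_mul_eq_mul_div,
        div_eq_iff (exp_ne_zero _)]
      linear_combination norm_mul_exp_arg_mul_I a
    rw [this, neg_re, ofReal_re, neg_neg_iff_pos]
    exact norm_pos_iff.mpr ha

theorem AnalyticAt.eventually_eq_zero_of_re_nonneg {h : ℂ → ℂ} {z₀ : ℂ} (hz₀ : 0 ≤ z₀.im)
    (ha : AnalyticAt ℂ h z₀) (h0 : h z₀ = 0) (hd : deriv h z₀ = 0)
    (hre : ∀ᶠ z in 𝓝 z₀, 0 ≤ z.im → 0 ≤ (h z).re) : ∀ᶠ z in 𝓝 z₀, h z = 0 := by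
  rw [← analyticOrderAt_eq_top]
  by_contra hfin
  obtain ⟨n, hn⟩ := ENat.ne_top_iff_exists.mp hfin
  have h2n : 2 ≤ n := by
    have : ((2 : ℕ) : ℕ∞) ≤ analyticOrderAt h z₀ := by
      rw [natCast_le_analyticOrderAt_iff_iteratedDeriv_eq_zero ha]
      intro i hi
      interval_cases i <;> simpa
    rwa [← hn, Nat.cast_le] at this
  obtain ⟨g, hg, hg0, hfac⟩ := (ha.analyticOrderAt_eq_natCast (n := n)).mp hn.symm
  obtain ⟨u, hu, hneg⟩ := exists_im_nonneg_re_pow_mul_neg hg0 h2n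
  have hray : Tendsto (fun r : ℝ => z₀ + r * u) (𝓝 0) (𝓝 z₀) := by
    simpa using ((continuous_ofReal.mul continuous_const).const_add z₀).tendsto (0 : ℝ)
  have hneg_near : ∀ᶠ r : ℝ in 𝓝 0, (u ^ n * g (z₀ + r * u)).re < 0 :=
    ((continuous_re.tendsto _).comp
      ((hg.continuousAt.tendsto.comp hray).const_mul (u ^ n))).eventually (gt_mem_nhds hneg)
  have hnear := ((hray.eventually hre).and (hray.eventually hfac)).and hneg_near
  obtain ⟨r, ⟨⟨hre_r, hfac_r⟩, hneg_r⟩, hr : 0 < r⟩ :=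
    ((hnear.filter_mono nhdsWithin_le_nhds).and (self_mem_nhdsWithin (s := Set.Ioi 0))).exists
  have him : 0 ≤ (z₀ + r * u).im := by
    simpa using add_nonneg hz₀ (mul_nonneg hr.le hu)
  have hval : (h (z₀ + r * u)).re = r ^ n * (u ^ n * g (z₀ + r * u)).re := by
    rw [hfac_r, add_sub_cancel_left, smul_eq_mul, mul_pow, ← ofReal_pow, mul_assoc,
      re_ofReal_mul]
  exact (mul_neg_of_pos_of_neg (pow_pos hr n) hneg_r).not_ge (hval ▸ hre_r him)

theorem norm_sharp (f : ℂ → ℂ) (z : ℂ) : ‖sharp f z‖ = ‖f (conj z)‖ := norm_conj _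

theorem Differentiable.sharp {f : ℂ → ℂ} (hf : Differentiable ℂ f) :
    Differentiable ℂ (sharp f) := fun z => by
  have := (hf (conj z)).conj_conj
  rw [conj_conj] at this
  exact this

theorem Differentiable.sFun {e : ℂ → ℂ} (he : Differentiable ℂ e) (β : ℝ) :
    Differentiable ℂ (sFun e β) :=
  (differentiable_const _).mul (((differentiable_const _).mul he).sub
    ((differentiable_const _).mul he.sharp))

theorem sFun_eq_mul (e : ℂ → ℂ) (β : ℝ) (z : ℂ) :
    sFun e β z = I / 2 * exp (β * I) * (e z - exp (↑(-2 * β) * I) * sharp e z) := by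
  have : exp (-(I * β)) = exp (β * I) * exp (↑(-2 * β) * I) := by
    rw [← exp_add]; push_cast; ring_nf
  rw [sFun, this, mul_comm I]
  ring

namespace HermiteBiehler

variable {e : ℂ → ℂ} (he : HermiteBiehler e)
include he

theorem ne_zero_of_im_nonneg {z : ℂ} (hz : 0 ≤ z.im) : e z ≠ 0 := by
  rcases hz.lt_or_eq with hz | hz
  · intro h0
    exact (norm_nonneg _).not_gt (by simpa [h0] using he.2.2 z hz)
  · have : z = (z.re : ℂ) := ext rfl (by simp [← hz])
    rw [this]
    exact he.2.1 z.re

theorem norm_sharp_le {z : ℂ} (hz : 0 ≤ z.im) : ‖sharp e z‖ ≤ ‖e z‖ := by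
  rw [norm_sharp]
  rcases hz.lt_or_eq with hz | hz
  · exact (he.2.2 z hz).le
  · rw [conj_eq_iff_im.mpr hz.symm]

theorem im_eq_zero_of_norm_sharp_eq {z : ℂ} (h : ‖sharp e z‖ = ‖e z‖) : z.im = 0 := by
  rw [norm_sharp] at h
  rcases lt_trichotomy z.im 0 with hz | hz | hz
  · have := he.2.2 (conj z) (by simpa using hz)
    rw [conj_conj, h] at this
    exact absurd this (lt_irrefl _)
  · exact hz
  · exact absurd (h ▸ he.2.2 z hz) (lt_irrefl _)

theorem im_eq_zero_of_sFun_eq_zero (β : ℝ) {z : ℂ} (hz : sFun e β z = 0) : z.im = 0 := by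
  rw [sFun_eq_mul, mul_eq_zero, sub_eq_zero] at hz
  have hκ : I / 2 * exp (β * I) ≠ 0 := by simp [exp_ne_zero]
  apply he.im_eq_zero_of_norm_sharp_eq
  rw [hz.resolve_left hκ, norm_mul, norm_exp_ofReal_mul_I, one_mul]

theorem re_sFun_div_nonneg (β : ℝ) {z : ℂ} (hz : 0 ≤ z.im) :
    0 ≤ (sFun e β z / (I / 2 * exp (β * I) * e z)).re := by
  have hκ : I / 2 * exp (β * I) ≠ 0 := by simp [exp_ne_zero]
  have hez := he.ne_zero_of_im_nonneg hz
  rw [sFun_eq_mul, mul_div_mul_left _ _ hκ, sub_div, div_self hez, sub_re, one_re, sub_nonneg]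
  refine (re_le_norm _).trans ?_
  rw [norm_div, norm_mul, norm_exp_ofReal_mul_I, one_mul, div_le_one (norm_pos_iff.mpr hez)]
  exact he.norm_sharp_le hz

end HermiteBiehler

theorem zeros_real_simple_general (e : ℂ → ℂ) (he : HermiteBiehler e)
    (β : ℝ) :
    ∀ z₀ : ℂ, sFun e β z₀ = 0 → z₀.im = 0 ∧ deriv (sFun e β) z₀ ≠ 0 := by
  intro z₀ hz₀
  have hreal := he.im_eq_zero_of_sFun_eq_zero β hz₀
  refine ⟨hreal, fun hd => ?_⟩
  set κ : ℂ := I / 2 * exp (β * I)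
  have hκ : κ ≠ 0 := by simp [κ, exp_ne_zero]
  have hκe : κ * e z₀ ≠ 0 := mul_ne_zero hκ (he.ne_zero_of_im_nonneg hreal.ge)
  have hs := he.1.sFun β
  have hratio := (hs z₀).hasDerivAt.fun_div ((he.1 z₀).hasDerivAt.const_mul κ) hκe
  have hzero : ∀ᶠ z in 𝓝 z₀, sFun e β z / (κ * e z) = 0 :=
    AnalyticAt.eventually_eq_zero_of_re_nonneg hreal.ge
      ((hs.analyticAt z₀).div (analyticAt_const.mul (he.1.analyticAt z₀)) hκe) (by simp [hz₀])
      (by simp [hratio.deriv, hd, hz₀])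
      (Eventually.of_forall fun z hz => he.re_sFun_div_nonneg β hz)
  have hupper : ∃ᶠ z in 𝓝 z₀, 0 < z.im := by
    refine (mem_closure_iff_frequently (s := {z : ℂ | 0 < z.im})).mp ?_
    rw [closure_setOfPred_lt_im]
    exact hreal.ge
  obtain ⟨w, hw, hw0⟩ := (hupper.and_eventually hzero).exists
  have hsw : sFun e β w = 0 := by
    simpa [hκ, he.ne_zero_of_im_nonneg hw.le] using hw0
  linarith [he.im_eq_zero_of_sFun_eq_zero β hsw]

/-- Every zero of `s_β` is real and simple. -/
theorem zeros_real_simple (e : ℂ → ℂ) (he : HermiteBiehler e)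
    (β : ℝ) (hβ : β ∈ Set.Ico 0 Real.pi) :
    ∀ z₀ : ℂ, sFun e β z₀ = 0 → z₀.im = 0 ∧ deriv (sFun e β) z₀ ≠ 0 :=
  zeros_real_simple_general e he β
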